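/- arXiv:math/0701547 — 2 statements merged into one kernel-verified Lean document; each statement's English description precedes it below -/
import Mathlib

section
/- Let p and p' be two distinct vectors of ℝ². Set W = √(1 + ‖p‖²), W' = √(1 + ‖p'‖²), X = p/W, X' = p'/W', and in ℝ² × ℝ set n = (p, −1)/W and n' = (p', −1)/W'. Then ⟨X' − X, p' − p⟩ / ‖p' − p‖ ≥ ‖n' − n‖²/4 ≥ ‖X' − X‖²/4. -/
noncomputable section

/-- `W = √(1 + ‖p‖²)` for a gradient vector `p ∈ ℝ²`. -/
def Wv (p : ℝ × ℝ) : ℝ := Real.sqrt (1 + (p.1 ^ 2 + p.2 ^ 2))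

/-- Horizontal projection `X = p / W` of the downward unit normal of the graph with
gradient `p`. -/
def Xv (p : ℝ × ℝ) : ℝ × ℝ := (p.1 / Wv p, p.2 / Wv p)

/-- The downward unit normal `n = (p, -1)/W ∈ ℝ² × ℝ` of the graph with gradient `p`. -/
def nv (p : ℝ × ℝ) : ℝ × ℝ × ℝ := (p.1 / Wv p, p.2 / Wv p, -1 / Wv p)

/-- Euclidean inner product on `ℝ²`. -/
def ip2 (a b : ℝ × ℝ) : ℝ := a.1 * b.1 + a.2 * b.2

/-- Euclidean inner product on `ℝ² × ℝ`. -/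
def ip3 (a b : ℝ × ℝ × ℝ) : ℝ := a.1 * b.1 + a.2.1 * b.2.1 + a.2.2 * b.2.2

/-- Squared Euclidean norm on `ℝ²`. -/
def nsq2 (a : ℝ × ℝ) : ℝ := a.1 ^ 2 + a.2 ^ 2

/-- Squared Euclidean norm on `ℝ² × ℝ`. -/
def nsq3 (a : ℝ × ℝ × ℝ) : ℝ := a.1 ^ 2 + a.2.1 ^ 2 + a.2.2 ^ 2

/-! The flux identity `⟨X' - X, p' - p⟩ = (W + W') ‖n' - n‖² / 2` reduces the first inequality
to `‖p' - p‖ ≤ ‖p‖ + ‖p'‖ ≤ W + W'` (which even gives the constant `1/2`); the second holds because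
`n' - n = (X' - X, 1/W - 1/W')`. -/

theorem Wv_pos (p : ℝ × ℝ) : 0 < Wv p :=
  Real.sqrt_pos.2 (by positivity)

theorem sq_Wv (p : ℝ × ℝ) : Wv p ^ 2 = 1 + nsq2 p :=
  Real.sq_sqrt (by positivity)

theorem sqrt_nsq2_eq_norm (x : ℝ × ℝ) : √(nsq2 x) = ‖WithLp.toLp 2 x‖ := by
  simp [WithLp.prod_norm_eq_of_L2, nsq2]

theorem sqrt_nsq2_pos {x : ℝ × ℝ} (hx : x ≠ 0) : 0 < √(nsq2 x) := by
  simpa [sqrt_nsq2_eq_norm] using hx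

theorem sqrt_nsq2_le_Wv (p : ℝ × ℝ) : √(nsq2 p) ≤ Wv p :=
  Real.sqrt_le_sqrt (le_add_of_nonneg_left zero_le_one)

theorem sqrt_nsq2_sub_le (p q : ℝ × ℝ) : √(nsq2 (q - p)) ≤ Wv p + Wv q := by
  calc √(nsq2 (q - p)) ≤ √(nsq2 q) + √(nsq2 p) := by
        simpa only [sqrt_nsq2_eq_norm, WithLp.toLp_sub] using norm_sub_le _ _
    _ ≤ Wv p + Wv q := by linarith [sqrt_nsq2_le_Wv p, sqrt_nsq2_le_Wv q]

theorem nsq2_Xv_sub_le_nsq3_nv_sub (p q : ℝ × ℝ) :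
    nsq2 (Xv q - Xv p) ≤ nsq3 (nv q - nv p) := by
  simp only [nsq2, nsq3, Xv, nv, Prod.fst_sub, Prod.snd_sub]
  exact le_add_of_nonneg_right (sq_nonneg _)

theorem ip2_Xv_sub_sub (p q : ℝ × ℝ) :
    ip2 (Xv q - Xv p) (q - p) = (Wv p + Wv q) * nsq3 (nv q - nv p) / 2 := by
  have hp := (Wv_pos p).ne'
  have hq := (Wv_pos q).ne'
  have hWp := sq_Wv p
  have hWq := sq_Wv q
  simp only [ip2, nsq2, nsq3, Xv, nv, Prod.fst_sub, Prod.snd_sub] at hWp hWq ⊢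
  field_simp
  linear_combination Wv q ^ 2 * (Wv q - Wv p) * hWp + Wv p ^ 2 * (Wv p - Wv q) * hWq

/-- **Lemma A.1 (pointwise form).** For two distinct gradient vectors `p ≠ p'` in `ℝ²`,
with `W = √(1+‖p‖²)`, `X = p/W`, `n = (p,-1)/W` (and similarly for `p'`), one has
`⟨X' - X, p' - p⟩/‖p' - p‖ ≥ ‖n' - n‖²/4 ≥ ‖X' - X‖²/4`. -/
theorem flux_normal_inequality (p p' : ℝ × ℝ) (hne : p ≠ p') :
    ip2 (Xv p' - Xv p) (p' - p) / Real.sqrt (nsq2 (p' - p)) ≥ nsq3 (nv p' - nv p) / 4 ∧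
    nsq3 (nv p' - nv p) / 4 ≥ nsq2 (Xv p' - Xv p) / 4 := by
  have hN : 0 ≤ nsq3 (nv p' - nv p) := by unfold nsq3; positivity
  have hD : 0 < √(nsq2 (p' - p)) := sqrt_nsq2_pos (sub_ne_zero.2 hne.symm)
  have hDW := sqrt_nsq2_sub_le p p'
  refine ⟨?_, by linarith [nsq2_Xv_sub_le_nsq3_nv_sub p p']⟩
  rw [ip2_Xv_sub_sub, ge_iff_le, le_div_iff₀ hD]
  nlinarith
end
end

section
/- The function h(x,y) = ln((√(x²+y²) + y)/x), defined on the quadrant Q = {(x,y) ∈ ℝ² : x > 0, y > 0} ⊆ H, is a solution of the minimal surface equation on Q. Moreover h(x,y) → 0 as (x,y) → (x₀,0) within Q for every x₀ > 0, and h(x,y) → +∞ as (x,y) → (0,y₀) within Q for every y₀ > 0; thus h is a minimal graph over the half-plane of H bounded by the geodesic {x = 0} that takes asymptotic value 0 on the ideal boundary arc {y = 0, x > 0} and boundary value +∞ on the geodesic {x = 0, y > 0}. -/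
noncomputable section

open Real Filter Set Topology

/-- Points of the ideal boundary `∂∞H = ℝ ∪ {∞}` of the hyperbolic plane:
`some a` is the point `a ∈ ℝ`, `none` is the point `∞`. -/
abbrev IdealPoint : Type := Option ℝ

/-- The upper half-plane model `H` of the hyperbolic plane. -/
def UHP : Set (ℝ × ℝ) := {p | 0 < p.2}

/-- Inverse hyperbolic cosine. -/
def acosh (x : ℝ) : ℝ := Real.log (x + Real.sqrt (x ^ 2 - 1))

/-- The hyperbolic distance on the upper half-plane. -/
def hdist (p q : ℝ × ℝ) : ℝ :=
  acosh (1 + ((p.1 - q.1) ^ 2 + (p.2 - q.2) ^ 2) / (2 * p.2 * q.2))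

/-- Cyclic successor on `Fin n`. -/
def cyc {n : ℕ} (i : Fin n) : Fin n := ⟨(i.val + 1) % n, Nat.mod_lt _ i.pos⟩

/-- A defining function of the complete geodesic with the given ideal endpoints:
the geodesic is its zero set in `UHP`, and its sign separates the two sides. -/
def geodFn : IdealPoint → IdealPoint → ℝ × ℝ → ℝ
  | some a, some b, p => (p.1 - a) * (p.1 - b) + p.2 ^ 2
  | some a, none, p => p.1 - a
  | none, some b, p => p.1 - b
  | none, none, _ => 1

/-- The complete geodesic of the hyperbolic plane with ideal endpoints `a`, `b`
(a Euclidean semicircle centered on the `x`-axis, or a vertical half-line). -/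
def geodesic (a b : IdealPoint) : Set (ℝ × ℝ) := {p | p ∈ UHP ∧ geodFn a b p = 0}

/-- Sign describing on which side of the geodesic `(a, b)` an ideal point `c` lies. -/
def idealSide : IdealPoint → IdealPoint → IdealPoint → ℝ
  | some a, some b, some c => (c - a) * (c - b)
  | some _, some _, none => 1
  | some a, none, some c => c - a
  | none, some b, some c => c - b
  | _, _, _ => 0

/-- Angle coordinate identifying `∂∞H` with a circle. -/
def idealAngle : IdealPoint → ℝ
  | some x => 2 * Real.arctan x
  | none => Real.pi

/-- The ideal points `d 0, …, d (n-1)` are listed in cyclic order around `∂∞H`. -/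
def InCyclicOrder {n : ℕ} (d : Fin n → IdealPoint) : Prop :=
  (∃ r : Fin n, StrictMono fun i : Fin n => idealAngle (d (i + r))) ∨
  (∃ r : Fin n, StrictAnti fun i : Fin n => idealAngle (d (i + r)))

/-- The open ideal polygonal domain with vertices `d` (in cyclic order): the interior of
the hyperbolic convex hull of the vertices, i.e. the set of points of `UHP` lying strictly
on the same side of each side of the polygon as the remaining vertices. -/
def polyDomain {n : ℕ} (d : Fin n → IdealPoint) : Set (ℝ × ℝ) :=
  {p | p ∈ UHP ∧ ∀ i j : Fin n, j ≠ i → j ≠ cyc i →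
    0 < geodFn (d i) (d (cyc i)) p * idealSide (d i) (d (cyc i)) (d j)}

/-- The side of the ideal polygon with vertices `d` joining `d i` to its cyclic successor. -/
def polySide {n : ℕ} (d : Fin n → IdealPoint) (i : Fin n) : Set (ℝ × ℝ) :=
  geodesic (d i) (d (cyc i))

/-- Partial derivative in the `x`-direction. -/
def pdx (u : ℝ × ℝ → ℝ) (p : ℝ × ℝ) : ℝ := fderiv ℝ u p (1, 0)

/-- Partial derivative in the `y`-direction. -/
def pdy (u : ℝ × ℝ → ℝ) (p : ℝ × ℝ) : ℝ := fderiv ℝ u p (0, 1)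

/-- `W = √(1 + y² (uₓ² + u_y²))` for the vertical graph of `u` in `H × ℝ`. -/
def Wgr (u : ℝ × ℝ → ℝ) (p : ℝ × ℝ) : ℝ :=
  Real.sqrt (1 + p.2 ^ 2 * ((pdx u p) ^ 2 + (pdy u p) ^ 2))

/-- `u` is a solution of the minimal surface equation (for vertical graphs in `H × ℝ`)
on the set `Ω`: `u` is `C²` on `Ω` and `∂ₓ(uₓ/W) + ∂_y(u_y/W) = 0` there. -/
def IsMinimalSol (Ω : Set (ℝ × ℝ)) (u : ℝ × ℝ → ℝ) : Prop :=
  ContDiffOn ℝ 2 u Ω ∧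
  ∀ p ∈ Ω, pdx (fun q => pdx u q / Wgr u q) p + pdy (fun q => pdy u q / Wgr u q) p = 0

/-- `u` takes the boundary value `+∞` on `A` (as a boundary arc of the domain `D`). -/
def BdryPlusInf (D A : Set (ℝ × ℝ)) (u : ℝ × ℝ → ℝ) : Prop :=
  ∀ p ∈ A, Tendsto u (𝓝[D] p) atTop

/-- `u` takes the boundary value `-∞` on `A` (as a boundary arc of the domain `D`). -/
def BdryMinusInf (D A : Set (ℝ × ℝ)) (u : ℝ × ℝ → ℝ) : Prop :=
  ∀ p ∈ A, Tendsto u (𝓝[D] p) atBot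

/-- `u` takes the finite boundary values `f` on `A` (as a boundary arc of the domain `D`). -/
def BdryFinite (D A : Set (ℝ × ℝ)) (u f : ℝ × ℝ → ℝ) : Prop :=
  ∀ p ∈ A, Tendsto u (𝓝[D] p) (𝓝 (f p))

/-! For `x > 0`, `h = ln((√(x² + y²) + y)/x) = arsinh (y/x)`. Writing `t = y/x`, we get
`∇h = ∇t / √(1 + t²)` and `y² |∇t|² = t² (1 + t²)`, so `W = √(1 + t²)` and the flux
`∇h / W = ∇t / (1 + t²) = (-y, x) / (x² + y²)` is the gradient of the polar angle, a harmonic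
function; hence the minimal surface equation holds. Near `(x₀, 0)` with `x₀ > 0`, `h` is
continuous with value `arsinh 0 = 0`; near `(0, y₀)` with `y₀ > 0`, `y/x → +∞`, hence `h → +∞`. -/

section MinimalSurfaceEquation

variable {Ω Ω' : Set (ℝ × ℝ)} {u v : ℝ × ℝ → ℝ} {p : ℝ × ℝ}

lemma pdx_eq_of_hasFDerivAt {D : ℝ × ℝ →L[ℝ] ℝ} (h : HasFDerivAt u D p) :
    pdx u p = D (1, 0) := by
  rw [pdx, h.fderiv]

lemma pdy_eq_of_hasFDerivAt {D : ℝ × ℝ →L[ℝ] ℝ} (h : HasFDerivAt u D p) :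
    pdy u p = D (0, 1) := by
  rw [pdy, h.fderiv]

lemma pdx_congr_of_eqOn (hΩ : IsOpen Ω) (h : EqOn u v Ω) (hp : p ∈ Ω) : pdx u p = pdx v p := by
  rw [pdx, pdx, (h.eventuallyEq_of_mem (hΩ.mem_nhds hp)).fderiv_eq]

lemma pdy_congr_of_eqOn (hΩ : IsOpen Ω) (h : EqOn u v Ω) (hp : p ∈ Ω) : pdy u p = pdy v p := by
  rw [pdy, pdy, (h.eventuallyEq_of_mem (hΩ.mem_nhds hp)).fderiv_eq]

lemma Wgr_congr_of_eqOn (hΩ : IsOpen Ω) (h : EqOn u v Ω) (hp : p ∈ Ω) : Wgr u p = Wgr v p := by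
  rw [Wgr, Wgr, pdx_congr_of_eqOn hΩ h hp, pdy_congr_of_eqOn hΩ h hp]

lemma IsMinimalSol.mono (hu : IsMinimalSol Ω u) (h : Ω' ⊆ Ω) : IsMinimalSol Ω' u :=
  ⟨hu.1.mono h, fun p hp => hu.2 p (h hp)⟩

lemma IsMinimalSol.congr (hu : IsMinimalSol Ω u) (hΩ : IsOpen Ω) (h : EqOn u v Ω) :
    IsMinimalSol Ω v := by
  refine ⟨hu.1.congr h.symm, fun p hp => ?_⟩
  have hflux_x : EqOn (fun q => pdx u q / Wgr u q) (fun q => pdx v q / Wgr v q) Ω :=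
    fun q hq => congrArg₂ (· / ·) (pdx_congr_of_eqOn hΩ h hq) (Wgr_congr_of_eqOn hΩ h hq)
  have hflux_y : EqOn (fun q => pdy u q / Wgr u q) (fun q => pdy v q / Wgr v q) Ω :=
    fun q hq => congrArg₂ (· / ·) (pdy_congr_of_eqOn hΩ h hq) (Wgr_congr_of_eqOn hΩ h hq)
  rw [← pdx_congr_of_eqOn hΩ hflux_x hp, ← pdy_congr_of_eqOn hΩ hflux_y hp]
  exact hu.2 p hp

end MinimalSurfaceEquation

lemma hasFDerivAt_snd_div_fst {p : ℝ × ℝ} (hx : p.1 ≠ 0) :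
    HasFDerivAt (fun q : ℝ × ℝ => q.2 / q.1)
      ((-(p.2 / p.1 ^ 2)) • ContinuousLinearMap.fst ℝ ℝ ℝ +
        p.1⁻¹ • ContinuousLinearMap.snd ℝ ℝ ℝ) p := by
  have h : HasFDerivAt (fun q : ℝ × ℝ => q.2 / q.1) _ p := (hasFDerivAt_snd (p := p)).mul
    ((hasDerivAt_inv hx).comp_hasFDerivAt p (hasFDerivAt_fst (𝕜 := ℝ) (p := p)))
  refine h.congr_fderiv (ContinuousLinearMap.ext fun v => ?_)
  simp [field]

lemma hasFDerivAt_sq_add_sq (p : ℝ × ℝ) :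
    HasFDerivAt (fun q : ℝ × ℝ => q.1 ^ 2 + q.2 ^ 2)
      ((2 * p.1) • ContinuousLinearMap.fst ℝ ℝ ℝ + (2 * p.2) • ContinuousLinearMap.snd ℝ ℝ ℝ)
      p := by
  refine (((hasFDerivAt_fst (𝕜 := ℝ) (p := p)).pow 2).add
    ((hasFDerivAt_snd (𝕜 := ℝ) (p := p)).pow 2)).congr_fderiv
    (ContinuousLinearMap.ext fun v => ?_)
  simp

lemma divergence_angleForm_eq_zero {p : ℝ × ℝ} (hp : p.1 ^ 2 + p.2 ^ 2 ≠ 0) :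
    pdx (fun q => -q.2 / (q.1 ^ 2 + q.2 ^ 2)) p + pdy (fun q => q.1 / (q.1 ^ 2 + q.2 ^ 2)) p
      = 0 := by
  have hinv := (hasDerivAt_inv hp).comp_hasFDerivAt p (hasFDerivAt_sq_add_sq p)
  have hx : HasFDerivAt (fun q : ℝ × ℝ => -q.2 / (q.1 ^ 2 + q.2 ^ 2)) _ p :=
    (hasFDerivAt_snd (p := p)).neg.mul hinv
  have hy : HasFDerivAt (fun q : ℝ × ℝ => q.1 / (q.1 ^ 2 + q.2 ^ 2)) _ p :=
    (hasFDerivAt_fst (p := p)).mul hinv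
  rw [pdx_eq_of_hasFDerivAt hx, pdy_eq_of_hasFDerivAt hy]
  simp [field]

lemma tendsto_arsinh_atTop : Tendsto arsinh atTop atTop :=
  sinhOrderIso.symm.tendsto_atTop

def abresch (p : ℝ × ℝ) : ℝ := arsinh (p.2 / p.1)

lemma abresch_eq_log {p : ℝ × ℝ} (hx : 0 < p.1) :
    abresch p = log ((√(p.1 ^ 2 + p.2 ^ 2) + p.2) / p.1) := by
  have hsq : 1 + (p.2 / p.1) ^ 2 = (√(p.1 ^ 2 + p.2 ^ 2) / p.1) ^ 2 := by
    rw [div_pow, div_pow, sq_sqrt (by positivity)]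
    field_simp
  rw [abresch, arsinh, hsq, sqrt_sq (by positivity)]
  ring_nf

section Derivatives

variable {p : ℝ × ℝ} (hx : p.1 ≠ 0)
include hx

lemma hasFDerivAt_abresch :
    HasFDerivAt abresch ((√(1 + (p.2 / p.1) ^ 2))⁻¹ • ((-(p.2 / p.1 ^ 2)) •
      ContinuousLinearMap.fst ℝ ℝ ℝ + p.1⁻¹ • ContinuousLinearMap.snd ℝ ℝ ℝ)) p :=
  (hasFDerivAt_snd_div_fst hx).arsinh

lemma pdx_abresch : pdx abresch p = -(p.2 / p.1 ^ 2) / √(1 + (p.2 / p.1) ^ 2) := by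
  rw [pdx_eq_of_hasFDerivAt (hasFDerivAt_abresch hx)]
  simp [field]

lemma pdy_abresch : pdy abresch p = p.1⁻¹ / √(1 + (p.2 / p.1) ^ 2) := by
  rw [pdy_eq_of_hasFDerivAt (hasFDerivAt_abresch hx)]
  simp [field]

lemma Wgr_abresch : Wgr abresch p = √(1 + (p.2 / p.1) ^ 2) := by
  have hs := sq_sqrt (by positivity : (0 : ℝ) ≤ 1 + (p.2 / p.1) ^ 2)
  have hs0 : √(1 + (p.2 / p.1) ^ 2) ≠ 0 := by positivity
  rw [Wgr, pdx_abresch hx, pdy_abresch hx]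
  congr 1
  generalize √(1 + (p.2 / p.1) ^ 2) = s at hs hs0 ⊢
  simp only [div_pow] at hs ⊢
  rw [hs]
  field_simp
  ring

lemma pdx_div_Wgr_abresch : pdx abresch p / Wgr abresch p = -p.2 / (p.1 ^ 2 + p.2 ^ 2) := by
  have hs := sq_sqrt (by positivity : (0 : ℝ) ≤ 1 + (p.2 / p.1) ^ 2)
  rw [pdx_abresch hx, Wgr_abresch hx, div_div, ← sq, hs]
  field_simp

lemma pdy_div_Wgr_abresch : pdy abresch p / Wgr abresch p = p.1 / (p.1 ^ 2 + p.2 ^ 2) := by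
  have hs := sq_sqrt (by positivity : (0 : ℝ) ≤ 1 + (p.2 / p.1) ^ 2)
  rw [pdy_abresch hx, Wgr_abresch hx, div_div, ← sq, hs]
  field_simp

end Derivatives

lemma isOpen_fst_ne_zero : IsOpen {p : ℝ × ℝ | p.1 ≠ 0} :=
  isOpen_ne_fun continuous_fst continuous_const

theorem isMinimalSol_abresch : IsMinimalSol {p | p.1 ≠ 0} abresch := by
  refine ⟨fun p hx => (contDiffAt_snd.div contDiffAt_fst hx).arsinh.contDiffWithinAt,
    fun p hx => ?_⟩
  have hflux_x : EqOn (fun q => pdx abresch q / Wgr abresch q)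
      (fun q => -q.2 / (q.1 ^ 2 + q.2 ^ 2)) {q | q.1 ≠ 0} :=
    fun q hq => pdx_div_Wgr_abresch hq
  have hflux_y : EqOn (fun q => pdy abresch q / Wgr abresch q)
      (fun q => q.1 / (q.1 ^ 2 + q.2 ^ 2)) {q | q.1 ≠ 0} :=
    fun q hq => pdy_div_Wgr_abresch hq
  rw [pdx_congr_of_eqOn isOpen_fst_ne_zero hflux_x hx,
    pdy_congr_of_eqOn isOpen_fst_ne_zero hflux_y hx]
  exact divergence_angleForm_eq_zero
    (add_pos_of_pos_of_nonneg (sq_pos_of_ne_zero hx) (sq_nonneg _)).ne'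

lemma tendsto_abresch_mk_zero {x₀ : ℝ} (hx₀ : x₀ ≠ 0) :
    Tendsto abresch (𝓝 (x₀, 0)) (𝓝 0) := by
  simpa [abresch] using (hasFDerivAt_abresch (p := (x₀, 0)) hx₀).continuousAt.tendsto

lemma tendsto_abresch_atTop {y₀ : ℝ} (hy₀ : 0 < y₀) :
    Tendsto abresch (𝓝[{p | 0 < p.1}] (0, y₀)) atTop := by
  have hx : Tendsto (fun q : ℝ × ℝ => q.1) (𝓝[{p | 0 < p.1}] (0, y₀)) (𝓝[>] 0) :=
    tendsto_nhdsWithin_iff.2 ⟨(continuous_fst.tendsto _).mono_left nhdsWithin_le_nhds,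
      eventually_nhdsWithin_of_forall fun q hq => hq⟩
  have hy : Tendsto (fun q : ℝ × ℝ => q.2) (𝓝[{p | 0 < p.1}] (0, y₀)) (𝓝 y₀) :=
    (continuous_snd.tendsto _).mono_left nhdsWithin_le_nhds
  exact tendsto_arsinh_atTop.comp (hy.pos_mul_atTop hy₀ (tendsto_inv_nhdsGT_zero.comp hx))

/-- The function `h(x,y) = ln((√(x²+y²) + y)/x)` is a solution of the minimal surface
equation on the quadrant `Q = {x > 0, y > 0} ⊆ H`; it tends to `0` at every ideal
boundary point `(x₀, 0)` with `x₀ > 0`, and to `+∞` at every point `(0, y₀)`, `y₀ > 0`,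
of the geodesic `{x = 0}`. -/
theorem abresch_barrier :
    IsMinimalSol {p : ℝ × ℝ | 0 < p.1 ∧ 0 < p.2}
      (fun p => Real.log ((Real.sqrt (p.1 ^ 2 + p.2 ^ 2) + p.2) / p.1)) ∧
    (∀ x₀ : ℝ, 0 < x₀ →
      Tendsto (fun p : ℝ × ℝ => Real.log ((Real.sqrt (p.1 ^ 2 + p.2 ^ 2) + p.2) / p.1))
        (𝓝[{p : ℝ × ℝ | 0 < p.1 ∧ 0 < p.2}] (x₀, 0)) (𝓝 0)) ∧
    (∀ y₀ : ℝ, 0 < y₀ →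
      Tendsto (fun p : ℝ × ℝ => Real.log ((Real.sqrt (p.1 ^ 2 + p.2 ^ 2) + p.2) / p.1))
        (𝓝[{p : ℝ × ℝ | 0 < p.1 ∧ 0 < p.2}] (0, y₀)) atTop) := by
  set Q := {p : ℝ × ℝ | 0 < p.1 ∧ 0 < p.2}
  have hQ_open : IsOpen Q :=
    (isOpen_lt continuous_const continuous_fst).inter (isOpen_lt continuous_const continuous_snd)
  have hQ : EqOn abresch (fun p => log ((√(p.1 ^ 2 + p.2 ^ 2) + p.2) / p.1)) Q :=
    fun p hp => abresch_eq_log hp.1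
  have hQ_ev (a : ℝ × ℝ) :
      abresch =ᶠ[𝓝[Q] a] fun p => log ((√(p.1 ^ 2 + p.2 ^ 2) + p.2) / p.1) :=
    eventually_nhdsWithin_of_forall hQ
  refine ⟨(isMinimalSol_abresch.mono fun p hp => hp.1.ne').congr hQ_open hQ,
    fun x₀ hx₀ => ?_, fun y₀ hy₀ => ?_⟩
  · exact ((tendsto_abresch_mk_zero hx₀.ne').mono_left nhdsWithin_le_nhds).congr' (hQ_ev _)
  · exact ((tendsto_abresch_atTop hy₀).mono_left (nhdsWithin_mono _ fun p hp => hp.1)).congr'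
      (hQ_ev _)
end
end
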